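/- The polynomial g(t) = t^4 + 2t^3 + t^2 + t - 1 has a unique real root r in the open interval (0,1), and every other complex root of g has absolute value strictly greater than r. -/

import Mathlib

/-!
Write g = p - 1 with p = t⁴ + 2t³ + t² + t. Since p has nonnegative coefficients and a positive
linear term, it is strictly increasing on [0, ∞), which gives the root r ∈ (0, 1) and its
uniqueness. For a complex root z, taking real parts termwise gives
1 = Re p(z) ≤ p(‖z‖), with strict inequality unless Re z = ‖z‖, i.e. unless z is a nonnegative
real. So ‖z‖ ≤ r forces z ≥ 0 with p(z) = 1, hence z = r.
-/

open Polynomial Finset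

namespace Polynomial

variable {p : ℝ[X]}

lemma one_mem_range_natDegree_succ (hp1 : 0 < p.coeff 1) : 1 ∈ range (p.natDegree + 1) :=
  mem_range.2 (Nat.lt_succ_of_le (le_natDegree_of_ne_zero hp1.ne'))

theorem strictMonoOn_eval_of_coeff_nonneg (hp : ∀ n, 0 ≤ p.coeff n) (hp1 : 0 < p.coeff 1) :
    StrictMonoOn (fun x => p.eval x) (Set.Ici 0) := by
  intro x hx y _ hxy
  simp only [eval_eq_sum_range]
  refine sum_lt_sum (fun i _ => ?_) ⟨1, one_mem_range_natDegree_succ hp1, ?_⟩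
  · exact mul_le_mul_of_nonneg_left (pow_le_pow_left₀ hx hxy.le i) (hp i)
  · simpa using mul_lt_mul_of_pos_left hxy hp1

theorem re_aeval_lt_eval_norm (hp : ∀ n, 0 ≤ p.coeff n) (hp1 : 0 < p.coeff 1) {z : ℂ}
    (hz : z.re < ‖z‖) : (aeval z p).re < p.eval ‖z‖ := by
  rw [aeval_eq_sum_range, eval_eq_sum_range, Complex.re_sum]
  refine sum_lt_sum (fun i _ => ?_) ⟨1, one_mem_range_natDegree_succ hp1, ?_⟩
  · rw [Complex.smul_re, smul_eq_mul, ← norm_pow]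
    exact mul_le_mul_of_nonneg_left (Complex.re_le_norm _) (hp i)
  · simpa using mul_lt_mul_of_pos_left hz hp1

theorem lt_norm_of_aeval_eq_of_ne (hp : ∀ n, 0 ≤ p.coeff n) (hp1 : 0 < p.coeff 1) {r c : ℝ}
    (hr : 0 ≤ r) (hpr : p.eval r = c) {z : ℂ} (hz : aeval z p = c) (hzr : z ≠ r) :
    r < ‖z‖ := by
  by_contra! hle
  rcases (Complex.re_le_norm z).lt_or_eq with hre | hre
  · have hlt := re_aeval_lt_eval_norm hp hp1 hre
    rw [hz, Complex.ofReal_re, ← hpr] at hlt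
    exact ((strictMonoOn_eval_of_coeff_nonneg hp hp1).monotoneOn (norm_nonneg z) hr hle).not_gt hlt
  · obtain ⟨x, hx, rfl⟩ : ∃ x : ℝ, 0 ≤ x ∧ z = x :=
      ⟨‖z‖, norm_nonneg z, Complex.eq_coe_norm_of_nonneg (Complex.re_eq_norm.1 hre)⟩
    rw [← Complex.coe_algebraMap, aeval_algebraMap_apply_eq_algebraMap_eval,
      Complex.coe_algebraMap, Complex.ofReal_inj, ← hpr] at hz
    exact hzr (congrArg _ ((strictMonoOn_eval_of_coeff_nonneg hp hp1).injOn hx hr hz))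

end Polynomial

/-- The denominator factor `g` of the growth function is `growthPoly - 1`. -/
noncomputable def growthPoly : ℝ[X] := X ^ 4 + 2 * X ^ 3 + X ^ 2 + X

lemma coeff_growthPoly_nonneg (n : ℕ) : 0 ≤ growthPoly.coeff n := by
  simp only [growthPoly, coeff_add, coeff_X_pow, coeff_X, coeff_ofNat_mul]
  split_ifs <;> norm_num

lemma coeff_one_growthPoly_pos : 0 < growthPoly.coeff 1 := by
  simp [growthPoly, coeff_X]

lemma eval_growthPoly (x : ℝ) : growthPoly.eval x = x ^ 4 + 2 * x ^ 3 + x ^ 2 + x := by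
  simp [growthPoly]

lemma aeval_growthPoly (z : ℂ) : aeval z growthPoly = z ^ 4 + 2 * z ^ 3 + z ^ 2 + z := by
  simp [growthPoly, map_ofNat]

theorem stmt_5 :
    ∃ r : ℝ, r ∈ Set.Ioo (0 : ℝ) 1 ∧
      r ^ 4 + 2 * r ^ 3 + r ^ 2 + r - 1 = 0 ∧
      (∀ r' : ℝ, r' ∈ Set.Ioo (0 : ℝ) 1 →
        r' ^ 4 + 2 * r' ^ 3 + r' ^ 2 + r' - 1 = 0 → r' = r) ∧
      (∀ z : ℂ, z ^ 4 + 2 * z ^ 3 + z ^ 2 + z - 1 = 0 →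
        z ≠ (r : ℂ) → (r : ℝ) < ‖z‖) := by
  have hmono :=
    strictMonoOn_eval_of_coeff_nonneg coeff_growthPoly_nonneg coeff_one_growthPoly_pos
  obtain ⟨r, hr, hpr⟩ : ∃ r ∈ Set.Ioo (0 : ℝ) 1, growthPoly.eval r = 1 :=
    intermediate_value_Ioo zero_le_one growthPoly.continuousOn (by norm_num [eval_growthPoly])
  have hg : r ^ 4 + 2 * r ^ 3 + r ^ 2 + r - 1 = 0 := by rw [eval_growthPoly] at hpr; linarith
  refine ⟨r, hr, hg, fun r' hr' hg' => ?_, fun z hz hzr => ?_⟩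
  · exact hmono.injOn hr'.1.le hr.1.le (by rw [eval_growthPoly, eval_growthPoly]; linarith)
  · refine lt_norm_of_aeval_eq_of_ne coeff_growthPoly_nonneg coeff_one_growthPoly_pos
      hr.1.le hpr ?_ hzr
    rw [aeval_growthPoly, Complex.ofReal_one]
    linear_combination hz
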